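/- arXiv:1401.1439 — 6 statements merged into one kernel-verified Lean document; each statement's English description precedes it below -/
import Mathlib

section
/- Let λ_i ∈ (0,1) for i ∈ ℕ with ∑_{i=1}^∞ λ_i = 1. If a_i ≥ 0 for all i and ∑_{i=1}^∞ λ_i a_i < ∞, then the infinite product ∏_{i=1}^∞ a_i^{λ_i} converges and ∏_{i=1}^∞ a_i^{λ_i} ≤ ∑_{i=1}^∞ λ_i a_i. -/
/-!
With `S = ∑ λᵢ aᵢ > 0`, the tangent line of `log` at `S` gives `aᵢ ^ λᵢ ≤ exp gᵢ` with
`gᵢ = λᵢ log S + λᵢ aᵢ / S - λᵢ` and `∑ gᵢ = log S`. The partial products of the ratios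
`aᵢ ^ λᵢ / exp gᵢ ∈ [0, 1]` decrease, hence converge to some `Q ≤ 1`, so the partial products of
`aᵢ ^ λᵢ` converge to `Q * S ≤ S`. If `S = 0` then every `aᵢ` vanishes.
-/

open Filter Finset Real Topology

theorem exists_tendsto_prod_range_mem_Icc {c : ℕ → ℝ} (hc₀ : ∀ i, 0 ≤ c i) (hc₁ : ∀ i, c i ≤ 1) :
    ∃ Q ∈ Set.Icc (0 : ℝ) 1, Tendsto (fun n ↦ ∏ i ∈ range n, c i) atTop (𝓝 Q) := by
  have hprod₀ (n : ℕ) : 0 ≤ ∏ i ∈ range n, c i := prod_nonneg fun i _ ↦ hc₀ i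
  have hanti : Antitone fun n ↦ ∏ i ∈ range n, c i :=
    antitone_nat_of_succ_le fun n ↦ by
      rw [prod_range_succ]; exact mul_le_of_le_one_right (hprod₀ n) (hc₁ n)
  have hlim := tendsto_atTop_ciInf hanti ⟨0, Set.forall_mem_range.2 hprod₀⟩
  refine ⟨_, ⟨ge_of_tendsto' hlim hprod₀, le_of_tendsto' hlim fun n ↦ ?_⟩, hlim⟩
  exact prod_le_one (fun i _ ↦ hc₀ i) fun i _ ↦ hc₁ i

theorem exists_tendsto_prod_range_le_exp {b g : ℕ → ℝ} {G : ℝ} (hb : ∀ i, 0 ≤ b i)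
    (hbg : ∀ i, b i ≤ exp (g i)) (hg : HasSum g G) :
    ∃ P, Tendsto (fun n ↦ ∏ i ∈ range n, b i) atTop (𝓝 P) ∧ P ≤ exp G := by
  obtain ⟨Q, ⟨-, hQ₁⟩, hQ⟩ := exists_tendsto_prod_range_mem_Icc
    (fun i ↦ div_nonneg (hb i) (exp_pos _).le) fun i ↦ (div_le_one (exp_pos _)).2 (hbg i)
  have hfactor (n : ℕ) :
      ∏ i ∈ range n, b i = (∏ i ∈ range n, b i / exp (g i)) * exp (∑ i ∈ range n, g i) := by
    rw [exp_sum, ← prod_mul_distrib]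
    exact prod_congr rfl fun i _ ↦ (div_mul_cancel₀ _ (exp_pos _).ne').symm
  refine ⟨Q * exp G, ?_, mul_le_of_le_one_left (exp_pos _).le hQ₁⟩
  simpa only [hfactor] using hQ.mul hg.tendsto_sum_nat.rexp

-- Weighted AM-GM for `a` and `t` in exponential form, i.e. `log a ≤ log t + a / t - 1`.
theorem rpow_le_exp_mul_log_add_mul_div_sub {a w t : ℝ} (ha : 0 ≤ a) (hw : 0 ≤ w) (ht : 0 < t) :
    a ^ w ≤ exp (w * log t + w * a / t - w) := by
  have htangent : a / t ≤ exp (a / t - 1) := by linarith [add_one_le_exp (a / t - 1)]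
  calc a ^ w = t ^ w * (a / t) ^ w := by
        rw [← mul_rpow ht.le (div_nonneg ha ht.le), mul_div_cancel₀ _ ht.ne']
    _ ≤ t ^ w * exp (a / t - 1) ^ w := by gcongr
    _ = exp (w * log t + w * a / t - w) := by
        rw [rpow_def_of_pos ht, ← exp_mul, ← exp_add]; ring_nf

theorem tendsto_prod_range_of_eq_zero {b : ℕ → ℝ} {i : ℕ} (hi : b i = 0) :
    Tendsto (fun n ↦ ∏ j ∈ range n, b j) atTop (𝓝 0) :=
  tendsto_const_nhds.congr' <| eventually_atTop.2 ⟨i + 1, fun _ hn ↦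
    (prod_eq_zero (mem_range.2 hn) hi).symm⟩

/-- Infinite weighted AM-GM: for weights l i ∈ (0,1) summing to 1 and a i ≥ 0 with
∑ l i * a i < ∞, the infinite product ∏ (a i) ^ (l i) converges (as a limit of partial
products) and is at most ∑ l i * a i. -/
theorem prod_rpow_le_tsum (l a : ℕ → ℝ)
    (hl : ∀ i, l i ∈ Set.Ioo (0 : ℝ) 1) (hsum : HasSum l 1)
    (ha : ∀ i, 0 ≤ a i) (hs : Summable (fun i => l i * a i)) :
    ∃ P : ℝ,
      Tendsto (fun n => ∏ i ∈ Finset.range n, a i ^ l i) atTop (nhds P) ∧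
      P ≤ ∑' i, l i * a i := by
  set S := ∑' i, l i * a i
  have hla (i : ℕ) : 0 ≤ l i * a i := mul_nonneg (hl i).1.le (ha i)
  rcases (tsum_nonneg hla).eq_or_lt with hS | hS
  · have ha₀ : a 0 = 0 := by
      have hla₀ : l 0 * a 0 ≤ S := hs.le_tsum 0 fun i _ ↦ hla i
      nlinarith [(hl 0).1, ha 0]
    refine ⟨0, tendsto_prod_range_of_eq_zero (i := 0) ?_, hS.le⟩
    rw [ha₀, zero_rpow (hl 0).1.ne']
  · obtain ⟨P, hP, hPS⟩ := exists_tendsto_prod_range_le_exp (fun i ↦ rpow_nonneg (ha i) _)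
      (fun i ↦ rpow_le_exp_mul_log_add_mul_div_sub (ha i) (hl i).1.le hS)
      (((hsum.mul_right (log S)).add (hs.hasSum.div_const S)).sub hsum)
    refine ⟨P, hP, hPS.trans_eq ?_⟩
    rw [one_mul, div_self hS.ne', add_sub_cancel_right, exp_log hS]
end

section
/- Let 1 < p_i < ∞ for i ∈ ℕ with ∑_{i=1}^∞ 1/p_i = 1. If c_i ≥ 0 for all i and ∑_{i=1}^∞ c_i^{p_i}/p_i < ∞, then the infinite product ∏_{i=1}^∞ c_i converges and ∏_{i=1}^∞ c_i ≤ ∑_{i=1}^∞ c_i^{p_i}/p_i. -/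
open Filter Finset Real Topology

/-! The finite Young inequality `∏ c i ≤ ∑ c i ^ p i / p i + (1 - ∑ 1 / p i)` is weighted AM-GM
with the missing weight `1 - ∑ 1 / p i` put on the value `1`; letting the range grow gives the
bound. For convergence, the one-term case `c ≤ 1 + (c ^ p - 1) / p ≤ exp ((c ^ p - 1) / p)`
shows that `∏ c i * exp (-b i)` is antitone for the summable `b i = (c i ^ p i - 1) / p i`. -/

theorem Real.geom_mean_le_arith_mean_weighted_add_one_sub {ι : Type*} (s : Finset ι)
    (w z : ι → ℝ) (hw : ∀ i ∈ s, 0 ≤ w i) (hw' : ∑ i ∈ s, w i ≤ 1) (hz : ∀ i ∈ s, 0 ≤ z i) :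
    ∏ i ∈ s, z i ^ w i ≤ ∑ i ∈ s, w i * z i + (1 - ∑ i ∈ s, w i) := by
  have key := geom_mean_le_arith_mean_weighted (insertNone s)
    (fun o => o.elim (1 - ∑ i ∈ s, w i) w) (fun o => o.elim 1 z)
    (by rintro (_ | i) hi <;> simp_all) (by simp [sum_insertNone])
    (by rintro (_ | i) hi <;> simp_all)
  simpa [prod_insertNone, sum_insertNone, add_comm] using key

theorem prod_le_sum_rpow_div_add_one_sub {ι : Type*} (s : Finset ι) (p c : ι → ℝ)
    (hp : ∀ i ∈ s, 0 < p i) (hps : ∑ i ∈ s, 1 / p i ≤ 1) (hc : ∀ i ∈ s, 0 ≤ c i) :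
    ∏ i ∈ s, c i ≤ ∑ i ∈ s, c i ^ p i / p i + (1 - ∑ i ∈ s, 1 / p i) := by
  have key := geom_mean_le_arith_mean_weighted_add_one_sub s (fun i => 1 / p i)
    (fun i => c i ^ p i) (fun i hi => (one_div_pos.2 (hp i hi)).le) hps
    (fun i hi => rpow_nonneg (hc i hi) _)
  calc ∏ i ∈ s, c i = ∏ i ∈ s, (c i ^ p i) ^ (1 / p i) := prod_congr rfl fun i hi => by
        rw [one_div, rpow_rpow_inv (hc i hi) (hp i hi).ne']
    _ ≤ _ := key.trans_eq (by simp only [one_div_mul_eq_div])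

theorem le_exp_rpow_sub_one_div {c p : ℝ} (hc : 0 ≤ c) (hp : 1 ≤ p) :
    c ≤ exp ((c ^ p - 1) / p) := by
  have hp₀ : 0 < p := one_pos.trans_le hp
  have young : c ≤ c ^ p / p + (1 - 1 / p) := by
    simpa using prod_le_sum_rpow_div_add_one_sub {()} (fun _ => p) (fun _ => c)
      (by simp [hp₀]) (by simpa using inv_le_one_of_one_le₀ hp) (by simp [hc])
  calc c ≤ (c ^ p - 1) / p + 1 := young.trans_eq (by ring)
    _ ≤ exp ((c ^ p - 1) / p) := add_one_le_exp _

theorem exists_tendsto_prod_range_of_le_exp {c b : ℕ → ℝ} (hc : ∀ i, 0 ≤ c i)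
    (hcb : ∀ i, c i ≤ exp (b i)) (hb : Summable b) :
    ∃ P, Tendsto (fun n => ∏ i ∈ range n, c i) atTop (𝓝 P) := by
  set a : ℕ → ℝ := fun n => ∏ i ∈ range n, c i * exp (-b i)
  have ha₀ : ∀ n, 0 ≤ a n := fun n => prod_nonneg fun i _ => mul_nonneg (hc i) (exp_pos _).le
  have ha_anti : Antitone a := antitone_nat_of_succ_le fun n => by
    have hfactor : c n * exp (-b n) ≤ 1 := by
      rw [exp_neg, ← div_eq_mul_inv, div_le_one (exp_pos _)]
      exact hcb n
    simpa [a, prod_range_succ] using mul_le_of_le_one_right (ha₀ n) hfactor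
  have hprod : ∀ n, ∏ i ∈ range n, c i = a n * exp (∑ i ∈ range n, b i) := fun n => by
    rw [exp_sum, ← prod_mul_distrib]
    exact prod_congr rfl fun i _ => by rw [mul_assoc, ← exp_add, neg_add_cancel, exp_zero, mul_one]
  refine ⟨(⨅ n, a n) * exp (∑' i, b i), ?_⟩
  simp only [hprod]
  exact (tendsto_atTop_ciInf ha_anti ⟨0, by rintro _ ⟨n, rfl⟩; exact ha₀ n⟩).mul
    ((continuous_exp.tendsto _).comp hb.hasSum.tendsto_sum_nat)

/-- Infinite Young-type inequality: for exponents p i ∈ (1,∞) with ∑ 1/(p i) = 1 and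
c i ≥ 0 with ∑ (c i)^(p i) / p i < ∞, the infinite product ∏ c i converges (as a limit of
partial products) and is at most ∑ (c i)^(p i) / p i. -/
theorem prod_le_tsum_rpow_div (p c : ℕ → ℝ)
    (hp : ∀ i, 1 < p i) (hps : HasSum (fun i => 1 / p i) 1)
    (hc : ∀ i, 0 ≤ c i) (hs : Summable (fun i => c i ^ p i / p i)) :
    ∃ P : ℝ,
      Tendsto (fun n => ∏ i ∈ Finset.range n, c i) atTop (nhds P) ∧
      P ≤ ∑' i, c i ^ p i / p i := by
  have hp₀ : ∀ i, 0 < p i := fun i => one_pos.trans (hp i)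
  have hb : Summable fun i => (c i ^ p i - 1) / p i := by
    simpa only [sub_div] using hs.sub hps.summable
  obtain ⟨P, hP⟩ := exists_tendsto_prod_range_of_le_exp hc
    (fun i => le_exp_rpow_sub_one_div (hc i) (hp i).le) hb
  have hbound : Tendsto (fun n => ∑ i ∈ range n, c i ^ p i / p i + (1 - ∑ i ∈ range n, 1 / p i))
      atTop (𝓝 (∑' i, c i ^ p i / p i)) := by
    simpa using hs.hasSum.tendsto_sum_nat.add
      ((tendsto_const_nhds (x := (1 : ℝ))).sub hps.tendsto_sum_nat)
  refine ⟨P, hP, le_of_tendsto_of_tendsto' hP hbound fun n => ?_⟩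
  exact prod_le_sum_rpow_div_add_one_sub _ p c (fun i _ => hp₀ i)
    (sum_le_hasSum _ (fun i _ => (one_div_pos.2 (hp₀ i)).le) hps) (fun i _ => hc i)
end

section
/- Let (Ω, F, μ) be a measure space, f_i : Ω → [0,∞) measurable for i ∈ ℕ, and 1 < p_i < ∞ with ∑_{i=1}^∞ 1/p_i = 1. If ‖f_i‖_{L^{p_i}} = 1 for all i, then the pointwise infinite product ∏_{i=1}^∞ f_i is well defined almost everywhere and ‖∏_{i=1}^∞ f_i‖_{L^1} ≤ 1. -/
/-!
Write `F = ∑ᵢ fᵢ^{pᵢ}/pᵢ`. Since `∫ fᵢ^{pᵢ} = 1`, `∫ F = ∑ᵢ 1/pᵢ = 1`, so `F < ∞` a.e.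
At such a point, weighted AM-GM with the deficit weight `1 - ∑_{i<n} 1/pᵢ` put on the value `1`
gives `∏_{i<n} fᵢ ≤ ∑_{i<n} fᵢ^{pᵢ}/pᵢ + (1 - ∑_{i<n} 1/pᵢ)`. Applied to `max fᵢ 1` it bounds the
nondecreasing products `∏ max fᵢ 1`, while `∏ min fᵢ 1` is nonincreasing and nonnegative, so the
partial products `∏ fᵢ = ∏ min fᵢ 1 · ∏ max fᵢ 1` converge, and their limit is at most `F`.
Integrating gives the bound.
-/

open MeasureTheory Filter Finset Topology

namespace Real

theorem geom_mean_le_arith_mean_weighted_add_one_sub_s4 {ι : Type*} (s : Finset ι) (w z : ι → ℝ)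
    (hw : ∀ i ∈ s, 0 ≤ w i) (hw' : ∑ i ∈ s, w i ≤ 1) (hz : ∀ i ∈ s, 0 ≤ z i) :
    ∏ i ∈ s, z i ^ w i ≤ ∑ i ∈ s, w i * z i + (1 - ∑ i ∈ s, w i) := by
  have h := geom_mean_le_arith_mean_weighted s.insertNone
    (fun i => i.elim (1 - ∑ i ∈ s, w i) w) (fun i => i.elim 1 z)
    (Finset.forall_mem_insertNone.2 ⟨sub_nonneg.2 hw', hw⟩)
    (by simp [Finset.sum_insertNone])
    (Finset.forall_mem_insertNone.2 ⟨zero_le_one, hz⟩)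
  simpa [Finset.prod_insertNone, Finset.sum_insertNone, add_comm] using h

theorem prod_le_sum_rpow_div_add_one_sub {ι : Type*} (s : Finset ι) {a p : ι → ℝ}
    (ha : ∀ i ∈ s, 0 ≤ a i) (hp : ∀ i ∈ s, 0 < p i) (hs : ∑ i ∈ s, 1 / p i ≤ 1) :
    ∏ i ∈ s, a i ≤ ∑ i ∈ s, a i ^ p i / p i + (1 - ∑ i ∈ s, 1 / p i) := calc
  ∏ i ∈ s, a i = ∏ i ∈ s, (a i ^ p i) ^ (1 / p i) :=
    prod_congr rfl fun i hi => by rw [one_div, rpow_rpow_inv (ha i hi) (hp i hi).ne']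
  _ ≤ ∑ i ∈ s, 1 / p i * a i ^ p i + (1 - ∑ i ∈ s, 1 / p i) :=
    geom_mean_le_arith_mean_weighted_add_one_sub_s4 s _ _ (fun i hi => (one_div_pos.2 (hp i hi)).le)
      hs fun i hi => rpow_nonneg (ha i hi) _
  _ = ∑ i ∈ s, a i ^ p i / p i + (1 - ∑ i ∈ s, 1 / p i) := by simp only [one_div_mul_eq_div]

end Real

theorem exists_tendsto_prod_range_of_bddAbove {a : ℕ → ℝ} (ha : ∀ i, 0 ≤ a i)
    (hbdd : BddAbove (Set.range fun n => ∏ i ∈ range n, max (a i) 1)) :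
    ∃ c, Tendsto (fun n => ∏ i ∈ range n, a i) atTop (𝓝 c) := by
  have hmono : Monotone fun n => ∏ i ∈ range n, max (a i) 1 :=
    monotone_nat_of_le_succ fun n => by
      rw [prod_range_succ]
      exact le_mul_of_one_le_right (prod_nonneg fun i _ => zero_le_one.trans (le_max_right _ _))
        (le_max_right _ _)
  have hanti : Antitone fun n => ∏ i ∈ range n, min (a i) 1 :=
    antitone_nat_of_succ_le fun n => by
      rw [prod_range_succ]
      exact mul_le_of_le_one_right (prod_nonneg fun i _ => le_min (ha i) zero_le_one)
        (min_le_right _ _)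
  have hbdd' : BddBelow (Set.range fun n => ∏ i ∈ range n, min (a i) 1) :=
    ⟨0, by rintro _ ⟨n, rfl⟩; exact prod_nonneg fun i _ => le_min (ha i) zero_le_one⟩
  refine ⟨_, ((tendsto_atTop_ciInf hanti hbdd').mul (tendsto_atTop_ciSup hmono hbdd)).congr
    fun n => ?_⟩
  rw [← prod_mul_distrib]
  exact prod_congr rfl fun i _ => by rw [min_mul_max, mul_one]

theorem exists_tendsto_prod_range_le_tsum {a p : ℕ → ℝ} (ha : ∀ i, 0 ≤ a i) (hp : ∀ i, 0 < p i)
    (hps : HasSum (fun i => 1 / p i) 1) (hsum : Summable fun i => a i ^ p i / p i) :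
    ∃ c, Tendsto (fun n => ∏ i ∈ range n, a i) atTop (𝓝 c) ∧ c ≤ ∑' i, a i ^ p i / p i := by
  set S := ∑' i, a i ^ p i / p i
  have hW n : ∑ i ∈ range n, 1 / p i ≤ 1 :=
    sum_le_hasSum _ (fun i _ => (one_div_pos.2 (hp i)).le) hps
  have hpartial n : ∑ i ∈ range n, a i ^ p i / p i ≤ S :=
    hsum.sum_le_tsum _ fun i _ => div_nonneg (Real.rpow_nonneg (ha i) _) (hp i).le
  have hbound n : ∏ i ∈ range n, a i ≤ S + (1 - ∑ i ∈ range n, 1 / p i) :=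
    (Real.prod_le_sum_rpow_div_add_one_sub _ (fun i _ => ha i) (fun i _ => hp i) (hW n)).trans
      (by linarith [hpartial n])
  have hmax i : max (a i) 1 ^ p i / p i ≤ a i ^ p i / p i + 1 / p i := by
    rw [← add_div]
    gcongr
    · exact (hp i).le
    rcases le_total (a i) 1 with h | h
    · rw [max_eq_right h, Real.one_rpow]
      linarith [Real.rpow_nonneg (ha i) (p i)]
    · rw [max_eq_left h]
      linarith
  have hbdd : BddAbove (Set.range fun n => ∏ i ∈ range n, max (a i) 1) := by
    refine ⟨S + 1, ?_⟩
    rintro _ ⟨n, rfl⟩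
    calc ∏ i ∈ range n, max (a i) 1
        ≤ ∑ i ∈ range n, max (a i) 1 ^ p i / p i + (1 - ∑ i ∈ range n, 1 / p i) :=
          Real.prod_le_sum_rpow_div_add_one_sub _ (fun i _ => (ha i).trans (le_max_left _ _))
            (fun i _ => hp i) (hW n)
      _ ≤ ∑ i ∈ range n, (a i ^ p i / p i + 1 / p i) + (1 - ∑ i ∈ range n, 1 / p i) := by
          gcongr with i; exact hmax i
      _ = ∑ i ∈ range n, a i ^ p i / p i + 1 := by rw [sum_add_distrib]; ring
      _ ≤ S + 1 := by linarith [hpartial n]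
  obtain ⟨c, hc⟩ := exists_tendsto_prod_range_of_bddAbove ha hbdd
  have hlim : Tendsto (fun n => S + (1 - ∑ i ∈ range n, 1 / p i)) atTop (𝓝 (S + (1 - 1))) :=
    tendsto_const_nhds.add (tendsto_const_nhds.sub hps.tendsto_sum_nat)
  exact ⟨c, hc, by simpa using le_of_tendsto_of_tendsto' hc hlim hbound⟩

theorem lintegral_ofReal_rpow_div {Ω : Type*} [MeasurableSpace Ω] (μ : Measure Ω) {f : Ω → ℝ}
    (hf : Measurable f) (hf0 : ∀ x, 0 ≤ f x) {p : ℝ} (hp : 0 < p) :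
    ∫⁻ x, ENNReal.ofReal (f x ^ p / p) ∂μ =
      (∫⁻ x, ENNReal.ofReal (f x) ^ p ∂μ) / ENNReal.ofReal p := by
  simp_rw [ENNReal.ofReal_div_of_pos hp, ← ENNReal.ofReal_rpow_of_nonneg (hf0 _) hp.le,
    div_eq_mul_inv]
  exact lintegral_mul_const _ (hf.ennreal_ofReal.pow_const p)

/-- Generalized Hölder (normalized case): if ∑ 1/(p i) = 1, each f i is nonnegative
measurable with ‖f i‖_{L^{p i}} = 1, then the pointwise infinite product ∏ f i is well
defined a.e. (as a limit of partial products) and has L¹ norm at most 1. -/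
theorem lintegral_prod_le_one
    {Ω : Type*} [MeasurableSpace Ω] (μ : Measure Ω)
    (p : ℕ → ℝ) (hp : ∀ i, 1 < p i) (hps : HasSum (fun i => 1 / p i) 1)
    (f : ℕ → Ω → ℝ) (hmeas : ∀ i, Measurable (f i)) (hpos : ∀ i x, 0 ≤ f i x)
    (hnorm : ∀ i, (∫⁻ x, ENNReal.ofReal (f i x) ^ p i ∂μ) ^ (1 / p i) = 1) :
    ∃ g : Ω → ℝ,
      (∀ᵐ x ∂μ, Tendsto (fun n => ∏ i ∈ Finset.range n, f i x) atTop (nhds (g x))) ∧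
      ∫⁻ x, ENNReal.ofReal (g x) ∂μ ≤ 1 := by
  have hp0 i : 0 < p i := one_pos.trans (hp i)
  set F : Ω → ENNReal := fun x => ∑' i, ENNReal.ofReal (f i x ^ p i / p i)
  have hmeasF i : Measurable fun x => ENNReal.ofReal (f i x ^ p i / p i) :=
    (((hmeas i).pow_const _).div_const _).ennreal_ofReal
  have hF : ∫⁻ x, F x ∂μ = 1 := by
    have hI i : ∫⁻ x, ENNReal.ofReal (f i x) ^ p i ∂μ = 1 := by
      simpa [← ENNReal.rpow_mul, (hp0 i).ne'] using congrArg (· ^ p i) (hnorm i)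
    rw [lintegral_tsum fun i => (hmeasF i).aemeasurable]
    simp_rw [lintegral_ofReal_rpow_div μ (hmeas _) (hpos _) (hp0 _), hI,
      ← ENNReal.ofReal_one, ← ENNReal.ofReal_div_of_pos (hp0 _)]
    rw [← ENNReal.ofReal_tsum_of_nonneg (fun i => (one_div_pos.2 (hp0 i)).le) hps.summable,
      hps.tsum_eq]
  have hfin : ∀ᵐ x ∂μ, F x ≠ ⊤ :=
    (ae_lt_top (Measurable.tsum hmeasF) (hF ▸ ENNReal.one_ne_top)).mono fun _ => ne_of_lt
  set g : Ω → ℝ := fun x => limUnder atTop fun n => ∏ i ∈ range n, f i x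
  have hg x (hx : F x ≠ ⊤) :
      Tendsto (fun n => ∏ i ∈ range n, f i x) atTop (𝓝 (g x)) ∧ ENNReal.ofReal (g x) ≤ F x := by
    have hnn i : 0 ≤ f i x ^ p i / p i := div_nonneg (Real.rpow_nonneg (hpos i x) _) (hp0 i).le
    have hsum : Summable fun i => f i x ^ p i / p i :=
      (ENNReal.summable_toReal hx).congr fun i => ENNReal.toReal_ofReal (hnn i)
    obtain ⟨c, hc, hcS⟩ := exists_tendsto_prod_range_le_tsum (hpos · x) hp0 hps hsum
    rw [show g x = c from hc.limUnder_eq]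
    exact ⟨hc, (ENNReal.ofReal_le_ofReal hcS).trans_eq (ENNReal.ofReal_tsum_of_nonneg hnn hsum)⟩
  refine ⟨g, hfin.mono fun x hx => (hg x hx).1, ?_⟩
  calc ∫⁻ x, ENNReal.ofReal (g x) ∂μ ≤ ∫⁻ x, F x ∂μ :=
        lintegral_mono_ae (hfin.mono fun x hx => (hg x hx).2)
    _ = 1 := hF
end

section
/- Let (Ω, F, μ) be a measure space, f_i : Ω → [0,∞) measurable for i ∈ ℕ, and 0 < p_i < ∞ with ∑_{i=1}^∞ 1/p_i = 1/p for some p > 0. If ∏_{i=1}^∞ ‖f_i‖_{L^{p_i}} < ∞, then the pointwise product ∏_{i=1}^∞ f_i is well defined almost everywhere and ‖∏_{i=1}^∞ f_i‖_{L^p} ≤ ∏_{i=1}^∞ ‖f_i‖_{L^{p_i}}. -/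
/-!
Normalise each `f i` by its `L^{p i}` norm `N i`. Since `log (max t 1) ≤ t ^ q / q`, the
normalised functions `u i` satisfy `∫ ∑ i, log⁺ (u i) ≤ ∑ i, 1 / p i < ∞`, so almost everywhere
the factors `max (u i) 1` have a convergent product, while the factors `min (u i) 1 ≤ 1` have a
decreasing one; hence `∏ f i = ∏ u i * ∏ N i` converges a.e. The norm bound then follows from
the finite Hölder inequality with exponent `(∑ i < n, 1 / p i)⁻¹ → p₀` and Fatou's lemma.
-/

open MeasureTheory Filter Finset Topology
open scoped ENNReal

theorem Real.log_max_one_le_rpow_div {t q : ℝ} (ht : 0 ≤ t) (hq : 0 < q) :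
    Real.log (max t 1) ≤ t ^ q / q := by
  rcases le_total t 1 with h | h
  · rw [max_eq_right h, Real.log_one]
    positivity
  · rw [max_eq_left h]
    exact Real.log_le_rpow_div ht hq

theorem Filter.Tendsto.ennrpow_of_ne_top {α : Type*} {l : Filter α} {a : α → ℝ≥0∞}
    {q : α → ℝ} {a₀ : ℝ≥0∞} {q₀ : ℝ} (ha : Tendsto a l (𝓝 a₀)) (ha₀ : a₀ ≠ ⊤)
    (hq : Tendsto q l (𝓝 q₀)) (hq₀ : 0 < q₀) :
    Tendsto (fun x => a x ^ q x) l (𝓝 (a₀ ^ q₀)) := by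
  lift a₀ to NNReal using ha₀
  have hfin : ∀ᶠ x in l, a x ≠ ⊤ := ha.eventually_ne ENNReal.coe_ne_top
  have hnn : Tendsto (fun x => (a x).toNNReal) l (𝓝 a₀) :=
    (ENNReal.tendsto_toNNReal ENNReal.coe_ne_top).comp ha
  rw [← ENNReal.coe_rpow_of_nonneg _ hq₀.le]
  refine (ENNReal.tendsto_coe.2 (hnn.nnrpow hq (Or.inr hq₀))).congr' ?_
  filter_upwards [hfin, hq.eventually (lt_mem_nhds hq₀)] with x hx hqx
  rw [ENNReal.coe_rpow_of_nonneg _ hqx.le, ENNReal.coe_toNNReal hx]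

theorem tendsto_prod_range_of_summable_log_max_one {a : ℕ → ℝ} (ha : ∀ i, 0 ≤ a i)
    (hs : Summable fun i => Real.log (max (a i) 1)) :
    ∃ c, Tendsto (fun n => ∏ i ∈ range n, a i) atTop (𝓝 c) := by
  have hmax : Tendsto (fun n => ∏ i ∈ range n, max (a i) 1) atTop
      (𝓝 (Real.exp (∑' i, Real.log (max (a i) 1)))) := by
    have hexp : ∀ n, ∏ i ∈ range n, max (a i) 1
        = Real.exp (∑ i ∈ range n, Real.log (max (a i) 1)) := fun n => by
      rw [Real.exp_sum]
      exact prod_congr rfl fun i _ => (Real.exp_log (by positivity)).symm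
    rw [funext hexp]
    exact (Real.continuous_exp.tendsto _).comp hs.hasSum.tendsto_sum_nat
  have hmin_nonneg : ∀ n, 0 ≤ ∏ i ∈ range n, min (a i) 1 :=
    fun n => prod_nonneg fun i _ => le_min (ha i) zero_le_one
  have hmin_anti : Antitone fun n => ∏ i ∈ range n, min (a i) 1 := by
    refine antitone_nat_of_succ_le fun n => ?_
    rw [prod_range_succ]
    exact mul_le_of_le_one_right (hmin_nonneg n) (min_le_right _ _)
  have hmin := tendsto_atTop_ciInf hmin_anti ⟨0, Set.forall_mem_range.2 hmin_nonneg⟩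
  refine ⟨_, (hmax.mul hmin).congr fun n => ?_⟩
  rw [← prod_mul_distrib]
  exact prod_congr rfl fun i _ => by rw [max_mul_min, mul_one]

theorem ENNReal.ne_top_of_tendsto_prod_range {a : ℕ → ℝ≥0∞} {L : ℝ≥0∞} (h0 : ∀ i, a i ≠ 0)
    (h : Tendsto (fun n => ∏ i ∈ range n, a i) atTop (𝓝 L)) (hL : L ≠ ⊤) (i : ℕ) :
    a i ≠ ⊤ := by
  intro hi
  refine hL (tendsto_nhds_unique h (tendsto_const_nhds.congr' ?_))
  filter_upwards [eventually_gt_atTop i] with n hn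
  exact (WithTop.prod_eq_top (mem_range.2 hn) hi fun j _ => h0 j).symm

section

variable {Ω : Type*} [MeasurableSpace Ω] {μ : Measure Ω}

theorem lintegral_prod_rpow_le {ι : Type*} {s : Finset ι} (hs : s.Nonempty)
    {F : ι → Ω → ℝ≥0∞} (hF : ∀ i ∈ s, AEMeasurable (F i) μ) {p : ι → ℝ}
    (hp : ∀ i ∈ s, 0 < p i) :
    ∫⁻ x, (∏ i ∈ s, F i x) ^ (∑ i ∈ s, 1 / p i)⁻¹ ∂μ
      ≤ (∏ i ∈ s, (∫⁻ x, F i x ^ p i ∂μ) ^ (1 / p i)) ^ (∑ i ∈ s, 1 / p i)⁻¹ := by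
  set q := (∑ i ∈ s, 1 / p i)⁻¹
  have hq : 0 ≤ q := inv_nonneg.2 (sum_nonneg fun i hi => (one_div_pos.2 (hp i hi)).le)
  have hweights : ∑ i ∈ s, q * (1 / p i) = 1 := by
    rw [← mul_sum]
    exact inv_mul_cancel₀ (sum_pos (fun i hi => one_div_pos.2 (hp i hi)) hs).ne'
  have hexp : ∀ i ∈ s, p i * (q * (1 / p i)) = q := fun i hi => by
    field_simp [(hp i hi).ne']
  calc ∫⁻ x, (∏ i ∈ s, F i x) ^ q ∂μ
      = ∫⁻ x, ∏ i ∈ s, (F i x ^ p i) ^ (q * (1 / p i)) ∂μ := by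
        refine lintegral_congr fun x => ?_
        rw [← ENNReal.prod_rpow_of_nonneg hq]
        exact prod_congr rfl fun i hi => by rw [← ENNReal.rpow_mul, hexp i hi]
    _ ≤ ∏ i ∈ s, (∫⁻ x, F i x ^ p i ∂μ) ^ (q * (1 / p i)) :=
        ENNReal.lintegral_prod_norm_pow_le s (fun i hi => (hF i hi).pow_const _) hweights
          fun i hi => mul_nonneg hq (one_div_pos.2 (hp i hi)).le
    _ = _ := by
        rw [← ENNReal.prod_rpow_of_nonneg hq]
        exact prod_congr rfl fun i _ => by rw [← ENNReal.rpow_mul, mul_comm]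

theorem lintegral_ofReal_div_rpow {f : Ω → ℝ} {c p : ℝ} (hc : 0 < c) (hp : 0 ≤ p) :
    ∫⁻ x, ENNReal.ofReal (f x / c) ^ p ∂μ
      = (∫⁻ x, ENNReal.ofReal (f x) ^ p ∂μ) / ENNReal.ofReal c ^ p := by
  simp_rw [ENNReal.ofReal_div_of_pos hc, ENNReal.div_rpow_of_nonneg _ _ hp, div_eq_mul_inv]
  exact lintegral_mul_const' _ _ (ENNReal.inv_ne_top.2 (by positivity))

theorem ae_nonpos_of_lintegral_ofReal_rpow_eq_zero {f : Ω → ℝ} (hf : AEMeasurable f μ) {p : ℝ}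
    (hp : 0 < p) (h : ∫⁻ x, ENNReal.ofReal (f x) ^ p ∂μ = 0) : ∀ᵐ x ∂μ, f x ≤ 0 := by
  filter_upwards [(lintegral_eq_zero_iff' (hf.ennreal_ofReal.pow_const p)).1 h] with x hx
  rw [Pi.zero_apply, ENNReal.rpow_eq_zero_iff_of_pos hp] at hx
  exact ENNReal.ofReal_eq_zero.1 hx

theorem ae_exists_tendsto_prod_range_of_lintegral_rpow_le_one {u : ℕ → Ω → ℝ}
    (hu : ∀ i, AEMeasurable (u i) μ) (hu₀ : ∀ i x, 0 ≤ u i x) {p : ℕ → ℝ} (hp : ∀ i, 0 < p i)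
    (hps : Summable fun i => 1 / p i) (hint : ∀ i, ∫⁻ x, ENNReal.ofReal (u i x) ^ p i ∂μ ≤ 1) :
    ∀ᵐ x ∂μ, ∃ c, Tendsto (fun n => ∏ i ∈ range n, u i x) atTop (𝓝 c) := by
  set φ : ℕ → Ω → ℝ≥0∞ := fun i x => ENNReal.ofReal (Real.log (max (u i x) 1))
  have hφ_meas : ∀ i, AEMeasurable (φ i) μ :=
    fun i => (((hu i).max aemeasurable_const).log).ennreal_ofReal
  have hφ_int : ∀ i, ∫⁻ x, φ i x ∂μ ≤ ENNReal.ofReal (1 / p i) := fun i => calc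
    ∫⁻ x, φ i x ∂μ ≤ ∫⁻ x, ENNReal.ofReal (1 / p i) * ENNReal.ofReal (u i x) ^ p i ∂μ := by
        refine lintegral_mono fun x => ?_
        rw [ENNReal.ofReal_rpow_of_nonneg (hu₀ i x) (hp i).le, ← ENNReal.ofReal_mul (by
          have := hp i; positivity), one_div_mul_eq_div]
        exact ENNReal.ofReal_le_ofReal (Real.log_max_one_le_rpow_div (hu₀ i x) (hp i))
    _ ≤ ENNReal.ofReal (1 / p i) := by
        rw [lintegral_const_mul' _ _ ENNReal.ofReal_ne_top]
        exact mul_le_of_le_one_right' (hint i)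
  have hsum_int : ∫⁻ x, ∑' i, φ i x ∂μ ≠ ⊤ := by
    rw [lintegral_tsum hφ_meas]
    refine ne_top_of_le_ne_top ?_ (ENNReal.tsum_le_tsum hφ_int)
    rw [← ENNReal.ofReal_tsum_of_nonneg (fun i => (one_div_pos.2 (hp i)).le) hps]
    exact ENNReal.ofReal_ne_top
  filter_upwards [ae_lt_top' (AEMeasurable.tsum hφ_meas) hsum_int] with x hx
  refine tendsto_prod_range_of_summable_log_max_one (hu₀ · x) ?_
  refine (ENNReal.summable_toReal hx.ne).congr fun i => ?_
  exact ENNReal.toReal_ofReal (Real.log_nonneg (le_max_right _ _))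

theorem ae_exists_tendsto_prod_range {p : ℕ → ℝ} (hp : ∀ i, 0 < p i)
    (hps : Summable fun i => 1 / p i) {f : ℕ → Ω → ℝ} (hf : ∀ i, AEMeasurable (f i) μ)
    (hf₀ : ∀ i x, 0 ≤ f i x) {L : ℝ≥0∞} (hL : L ≠ ⊤)
    (hprod : Tendsto
      (fun n => ∏ i ∈ range n, (∫⁻ x, ENNReal.ofReal (f i x) ^ p i ∂μ) ^ (1 / p i))
      atTop (𝓝 L)) :
    ∀ᵐ x ∂μ, ∃ c, Tendsto (fun n => ∏ i ∈ range n, f i x) atTop (𝓝 c) := by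
  set I : ℕ → ℝ≥0∞ := fun i => ∫⁻ x, ENNReal.ofReal (f i x) ^ p i ∂μ
  by_cases hzero : ∃ i, I i = 0
  · obtain ⟨i, hi⟩ := hzero
    filter_upwards [ae_nonpos_of_lintegral_ofReal_rpow_eq_zero (hf i) (hp i) hi] with x hx
    refine ⟨0, tendsto_const_nhds.congr' ?_⟩
    filter_upwards [eventually_gt_atTop i] with n hn
    exact (prod_eq_zero (mem_range.2 hn) (hx.antisymm (hf₀ i x))).symm
  push Not at hzero
  have hnorm_ne_zero : ∀ i, I i ^ (1 / p i) ≠ 0 := fun i => by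
    simp [ENNReal.rpow_eq_zero_iff, hzero i, (hp i).le]
  have hnorm_ne_top := ENNReal.ne_top_of_tendsto_prod_range hnorm_ne_zero hprod hL
  set N : ℕ → ℝ := fun i => (I i ^ (1 / p i)).toReal
  have hN : ∀ i, 0 < N i := fun i => ENNReal.toReal_pos (hnorm_ne_zero i) (hnorm_ne_top i)
  have hN_rpow : ∀ i, ENNReal.ofReal (N i) ^ p i = I i := fun i => by
    rw [ENNReal.ofReal_toReal (hnorm_ne_top i), ← ENNReal.rpow_mul, one_div_mul_cancel (hp i).ne',
      ENNReal.rpow_one]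
  have hnormalized : ∀ i, ∫⁻ x, ENNReal.ofReal (f i x / N i) ^ p i ∂μ ≤ 1 := fun i => by
    rw [lintegral_ofReal_div_rpow (hN i) (hp i).le, hN_rpow]
    exact ENNReal.div_self_le_one
  have hN_prod : Tendsto (fun n => ∏ i ∈ range n, N i) atTop (𝓝 L.toReal) := by
    simp_rw [N, ← ENNReal.toReal_prod]
    exact (ENNReal.tendsto_toReal hL).comp hprod
  filter_upwards [ae_exists_tendsto_prod_range_of_lintegral_rpow_le_one
    (fun i => (hf i).div_const (N i)) (fun i x => div_nonneg (hf₀ i x) (hN i).le) hp hps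
    hnormalized] with x ⟨c, hc⟩
  refine ⟨c * L.toReal, (hc.mul hN_prod).congr fun n => ?_⟩
  rw [← prod_mul_distrib]
  exact prod_congr rfl fun i _ => div_mul_cancel₀ _ (hN i).ne'

theorem lintegral_rpow_le_of_ae_tendsto_prod_range {p : ℕ → ℝ} {p₀ : ℝ} (hp : ∀ i, 0 < p i)
    (hp₀ : 0 < p₀) (hps : HasSum (fun i => 1 / p i) (1 / p₀)) {f : ℕ → Ω → ℝ}
    (hf : ∀ i, AEMeasurable (f i) μ) (hf₀ : ∀ i x, 0 ≤ f i x) {L : ℝ≥0∞} (hL : L ≠ ⊤)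
    (hprod : Tendsto
      (fun n => ∏ i ∈ range n, (∫⁻ x, ENNReal.ofReal (f i x) ^ p i ∂μ) ^ (1 / p i))
      atTop (𝓝 L))
    {g : Ω → ℝ} (hg : ∀ᵐ x ∂μ, Tendsto (fun n => ∏ i ∈ range n, f i x) atTop (𝓝 (g x))) :
    ∫⁻ x, ENNReal.ofReal (g x) ^ p₀ ∂μ ≤ L ^ p₀ := by
  set q : ℕ → ℝ := fun n => (∑ i ∈ range n, 1 / p i)⁻¹
  have hq : Tendsto q atTop (𝓝 p₀) := by
    simpa [q] using hps.tendsto_sum_nat.inv₀ (one_div_pos.2 hp₀).ne'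
  set F : ℕ → Ω → ℝ≥0∞ := fun n x => (∏ i ∈ range n, ENNReal.ofReal (f i x)) ^ q n
  have hF_lim : ∀ᵐ x ∂μ, Tendsto (F · x) atTop (𝓝 (ENNReal.ofReal (g x) ^ p₀)) := by
    filter_upwards [hg] with x hx
    refine Tendsto.ennrpow_of_ne_top ?_ ENNReal.ofReal_ne_top hq hp₀
    simp_rw [← ENNReal.ofReal_prod_of_nonneg fun i _ => hf₀ i x]
    exact ENNReal.tendsto_ofReal hx
  have hHolder : ∀ᶠ n in atTop, ∫⁻ x, F n x ∂μ
      ≤ (∏ i ∈ range n, (∫⁻ x, ENNReal.ofReal (f i x) ^ p i ∂μ) ^ (1 / p i)) ^ q n := by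
    filter_upwards [eventually_gt_atTop 0] with n hn
    exact lintegral_prod_rpow_le (nonempty_range_iff.2 hn.ne')
      (fun i _ => (hf i).ennreal_ofReal) fun i _ => hp i
  calc ∫⁻ x, ENNReal.ofReal (g x) ^ p₀ ∂μ
      = ∫⁻ x, liminf (F · x) atTop ∂μ :=
        lintegral_congr_ae (hF_lim.mono fun x hx => hx.liminf_eq.symm)
    _ ≤ liminf (fun n => ∫⁻ x, F n x ∂μ) atTop :=
        lintegral_liminf_le' fun n => (Finset.aemeasurable_fun_prod _ fun i _ =>
          (hf i).ennreal_ofReal).pow_const _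
    _ ≤ L ^ p₀ := by
        rw [← (hprod.ennrpow_of_ne_top hL hq hp₀).liminf_eq]
        exact liminf_le_liminf hHolder

end

/-- Generalized Hölder inequality with ∑ 1/(p i) = 1/p₀: if each f i is nonnegative
measurable and the infinite product of the norms ‖f i‖_{L^{p i}} converges to a finite
value L, then the pointwise infinite product ∏ f i is well defined a.e. and
‖∏ f i‖_{L^{p₀}} ≤ L = ∏ ‖f i‖_{L^{p i}}. -/
theorem eLpNorm_prod_le_prod_norm
    {Ω : Type*} [MeasurableSpace Ω] (μ : Measure Ω)
    (p : ℕ → ℝ) (p₀ : ℝ) (hp : ∀ i, 0 < p i) (hp₀ : 0 < p₀)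
    (hps : HasSum (fun i => 1 / p i) (1 / p₀))
    (f : ℕ → Ω → ℝ) (hmeas : ∀ i, Measurable (f i)) (hpos : ∀ i x, 0 ≤ f i x)
    (L : ℝ≥0∞) (hL : L ≠ ⊤)
    (hprod : Tendsto
      (fun n => ∏ i ∈ Finset.range n, (∫⁻ x, ENNReal.ofReal (f i x) ^ p i ∂μ) ^ (1 / p i))
      atTop (nhds L)) :
    ∃ g : Ω → ℝ,
      (∀ᵐ x ∂μ, Tendsto (fun n => ∏ i ∈ Finset.range n, f i x) atTop (nhds (g x))) ∧
      (∫⁻ x, ENNReal.ofReal (g x) ^ p₀ ∂μ) ^ (1 / p₀) ≤ L := by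
  have hf : ∀ i, AEMeasurable (f i) μ := fun i => (hmeas i).aemeasurable
  set g : Ω → ℝ := fun x => limUnder atTop fun n => ∏ i ∈ range n, f i x
  have hg : ∀ᵐ x ∂μ, Tendsto (fun n => ∏ i ∈ range n, f i x) atTop (𝓝 (g x)) :=
    (ae_exists_tendsto_prod_range hp hps.summable hf hpos hL hprod).mono
      fun _ => tendsto_nhds_limUnder
  refine ⟨g, hg, ?_⟩
  calc (∫⁻ x, ENNReal.ofReal (g x) ^ p₀ ∂μ) ^ (1 / p₀) ≤ (L ^ p₀) ^ (1 / p₀) := by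
        gcongr
        exact lintegral_rpow_le_of_ae_tendsto_prod_range hp hp₀ hps hf hpos hL hprod hg
    _ = L := by rw [one_div, ENNReal.rpow_rpow_inv hp₀.ne']
end

section
/- Let (Ω, F, μ) be a complete probability space with filtration (F_n), weights ω_i with σ_i = ω_i^{-1/(p_i-1)} ∈ L^1, exponents 1 < p_i < ∞ with ∑ 1/p_i = 1/p, and nonnegative f_i with ∏_{i=1}^∞ ‖f_i‖_{L^{p_i}(ω_i)} < ∞. If additionally ∏_{i=1}^∞ E_n(ω_i^{1-p'_i})^{1/p'_i} < ∞ a.e. for each n, then ∏_{i=1}^∞ E_n(f_i) ≤ (∏_{i=1}^∞ E_n(f_i^{p_i} ω_i)^{1/p_i}) · (∏_{i=1}^∞ E_n(ω_i^{1-p'_i})^{1/p'_i}) < ∞ almost everywhere. -/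
open MeasureTheory Filter
open scoped ENNReal NNReal

noncomputable section

/-- Limit of partial products in ℝ≥0∞ (via limsup; equals the limit when it exists). -/
def prodLim (a : ℕ → ℝ≥0∞) : ℝ≥0∞ :=
  Filter.limsup (fun k => ∏ i ∈ Finset.range k, a i) Filter.atTop

/-- Convergence of an infinite product in ℝ≥0∞. -/
def HasProdLim (a : ℕ → ℝ≥0∞) (L : ℝ≥0∞) : Prop :=
  Filter.Tendsto (fun k => ∏ i ∈ Finset.range k, a i) Filter.atTop (nhds L)

variable {Ω : Type*}

/-- Weighted L^q norm ‖f‖_{L^q(w)} = (∫ f^q w dμ)^{1/q}. -/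
def wNorm {m : MeasurableSpace Ω} (μ : Measure Ω) (f : Ω → ℝ) (q : ℝ) (w : Ω → ℝ) : ℝ≥0∞ :=
  (∫⁻ x, ENNReal.ofReal (f x) ^ q * ENNReal.ofReal (w x) ∂μ) ^ (1 / q)

/-- Conjugate exponent q' = q/(q-1). -/
def conjExp (q : ℝ) : ℝ := q / (q - 1)

/-- σ = w^{1-q'} = w^{-1/(q-1)}. -/
def sigmaW (w : Ω → ℝ) (q : ℝ) : Ω → ℝ := fun x => w x ^ (-(1 / (q - 1)))

/-- Generalized Doob maximal operator 𝔐(f⃗) = sup_n ∏ᵢ E(f i | ℱ n). -/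
def doobM {m0 : MeasurableSpace Ω} (μ : Measure Ω) (ℱ : Filtration ℕ m0)
    (f : ℕ → Ω → ℝ) (x : Ω) : ℝ≥0∞ :=
  ⨆ n, prodLim fun i => ENNReal.ofReal ((μ[f i|ℱ n]) x)

/-- ℕ∞-valued stopping time with respect to the filtration ℱ. -/
def IsStopT {m0 : MeasurableSpace Ω} (ℱ : Filtration ℕ m0) (τ : Ω → ℕ∞) : Prop :=
  ∀ n : ℕ, MeasurableSet[ℱ n] {x | τ x ≤ (n : ℕ∞)}

/-- E_τ(f), relevant on {τ < ∞} (junk value, via `toNat`, elsewhere). -/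
def stopCE {m0 : MeasurableSpace Ω} (μ : Measure Ω) (ℱ : Filtration ℕ m0) (f : Ω → ℝ)
    (τ : Ω → ℕ∞) (x : Ω) : ℝ := (μ[f|ℱ (τ x).toNat]) x

/-- Weighted weak-L^q norm ‖g‖_{L^{q,∞}(v)} = sup_λ λ |{g > λ}|_v^{1/q}. -/
def wkNorm {m : MeasurableSpace Ω} (μ : Measure Ω) (g : Ω → ℝ≥0∞) (q : ℝ) (v : Ω → ℝ) : ℝ≥0∞ :=
  ⨆ lam : ℝ≥0, (lam : ℝ≥0∞) *
    (∫⁻ x in {x | (lam : ℝ≥0∞) < g x}, ENNReal.ofReal (v x) ∂μ) ^ (1 / q)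

/-- Admissibility of f⃗: each f i nonnegative measurable with f i ∈ L^{p i}(ω i), and
∏ᵢ ‖f i‖_{L^{p i}(ω i)} convergent with finite value Lf. -/
def Adm {m : MeasurableSpace Ω} (μ : Measure Ω) (p : ℕ → ℝ) (ω : ℕ → Ω → ℝ)
    (f : ℕ → Ω → ℝ) (Lf : ℝ≥0∞) : Prop :=
  (∀ i, Measurable (f i)) ∧ (∀ i x, 0 ≤ f i x) ∧ (∀ i, wNorm μ (f i) (p i) (ω i) ≠ ⊤) ∧
    Lf ≠ ⊤ ∧ HasProdLim (fun i => wNorm μ (f i) (p i) (ω i)) Lf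

/-- The testing inequality: for all stopping times τ and admissible f⃗,
(∫_{τ<∞} ∏ᵢ E_τ(f i)^{p₀} v dμ)^{1/p₀} ≤ C ∏ᵢ ‖f i‖_{L^{p i}(ω i)}. -/
def TestIneq {m0 : MeasurableSpace Ω} (μ : Measure Ω) (ℱ : Filtration ℕ m0)
    (p : ℕ → ℝ) (p₀ : ℝ) (v : Ω → ℝ) (ω : ℕ → Ω → ℝ) (C : ℝ≥0∞) : Prop :=
  ∀ τ : Ω → ℕ∞, IsStopT ℱ τ → ∀ f Lf, Adm μ p ω f Lf →
    (∫⁻ x in {x | τ x ≠ ⊤},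
        (prodLim fun i => ENNReal.ofReal (stopCE μ ℱ (f i) τ x)) ^ p₀ *
          ENNReal.ofReal (v x) ∂μ) ^ (1 / p₀) ≤ C * Lf

/-- The weak-type inequality ‖𝔐(f⃗)‖_{L^{p₀,∞}(v)} ≤ C ∏ᵢ ‖f i‖_{L^{p i}(ω i)}. -/
def WeakIneq {m0 : MeasurableSpace Ω} (μ : Measure Ω) (ℱ : Filtration ℕ m0)
    (p : ℕ → ℝ) (p₀ : ℝ) (v : Ω → ℝ) (ω : ℕ → Ω → ℝ) (C : ℝ≥0∞) : Prop :=
  ∀ f Lf, Adm μ p ω f Lf → wkNorm μ (doobM μ ℱ f) p₀ v ≤ C * Lf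

/-- The strong-type inequality ‖𝔐(f⃗)‖_{L^{p₀}(v)} ≤ C ∏ᵢ ‖f i‖_{L^{p i}(ω i)}. -/
def StrongIneq {m0 : MeasurableSpace Ω} (μ : Measure Ω) (ℱ : Filtration ℕ m0)
    (p : ℕ → ℝ) (p₀ : ℝ) (v : Ω → ℝ) (ω : ℕ → Ω → ℝ) (C : ℝ≥0∞) : Prop :=
  ∀ f Lf, Adm μ p ω f Lf →
    (∫⁻ x, doobM μ ℱ f x ^ p₀ * ENNReal.ofReal (v x) ∂μ) ^ (1 / p₀) ≤ C * Lf

/-- The A_{p⃗} condition: E_n(v)^{1/p₀} ∏ᵢ E_n(ω i^{1-p i'})^{1/p i'} ≤ C for all n. -/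
def ApCond {m0 : MeasurableSpace Ω} (μ : Measure Ω) (ℱ : Filtration ℕ m0)
    (p : ℕ → ℝ) (p₀ : ℝ) (v : Ω → ℝ) (ω : ℕ → Ω → ℝ) (C : ℝ≥0∞) : Prop :=
  ∀ n : ℕ, ∀ᵐ x ∂μ,
    ENNReal.ofReal ((μ[v|ℱ n]) x) ^ (1 / p₀) *
      prodLim (fun i =>
        ENNReal.ofReal ((μ[sigmaW (ω i) (p i)|ℱ n]) x) ^ (1 / conjExp (p i))) ≤ C

/-- The reverse Hölder condition RH_{p⃗}:
∏ᵢ (∫_{τ<∞} σ i dμ)^{p₀/p i} ≤ C ∫_{τ<∞} ∏ᵢ (σ i)^{p₀/p i} dμ for all stopping times τ. -/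
def RHCond {m0 : MeasurableSpace Ω} (μ : Measure Ω) (ℱ : Filtration ℕ m0)
    (p : ℕ → ℝ) (p₀ : ℝ) (ω : ℕ → Ω → ℝ) (C : ℝ≥0∞) : Prop :=
  ∀ τ : Ω → ℕ∞, IsStopT ℱ τ →
    prodLim (fun i =>
        (∫⁻ x in {x | τ x ≠ ⊤}, ENNReal.ofReal (sigmaW (ω i) (p i) x) ∂μ) ^ (p₀ / p i))
      ≤ C * ∫⁻ x in {x | τ x ≠ ⊤},
          prodLim (fun i => ENNReal.ofReal (sigmaW (ω i) (p i) x) ^ (p₀ / p i)) ∂μ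

/-- The testing condition S_{p⃗}:
(∫_{τ<∞} 𝔐(σ⃗ χ_{τ<∞})^{p₀} v dμ)^{1/p₀} ≤ C ∏ᵢ |{τ<∞}|_{σ i}^{1/p i}. -/
def SpCond {m0 : MeasurableSpace Ω} (μ : Measure Ω) (ℱ : Filtration ℕ m0)
    (p : ℕ → ℝ) (p₀ : ℝ) (v : Ω → ℝ) (ω : ℕ → Ω → ℝ) (C : ℝ≥0∞) : Prop :=
  ∀ τ : Ω → ℕ∞, IsStopT ℱ τ →
    (∫⁻ x in {x | τ x ≠ ⊤},
        doobM μ ℱ (fun i => Set.indicator {y | τ y ≠ ⊤} (sigmaW (ω i) (p i))) x ^ p₀ *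
          ENNReal.ofReal (v x) ∂μ) ^ (1 / p₀)
      ≤ C * prodLim (fun i =>
          (∫⁻ x in {x | τ x ≠ ⊤}, ENNReal.ofReal (sigmaW (ω i) (p i) x) ∂μ) ^ (1 / p i))

/-- The standing assumptions of Section 3 of the paper. -/
structure Standing {m0 : MeasurableSpace Ω} (μ : Measure Ω) (ℱ : Filtration ℕ m0)
    (p : ℕ → ℝ) (p₀ : ℝ) (v : Ω → ℝ) (ω : ℕ → Ω → ℝ) : Prop where
  hgen : (⨆ n, (ℱ n : MeasurableSpace Ω)) = m0
  hp : ∀ i, 1 < p i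
  hp₀ : 0 < p₀
  hps : HasSum (fun i => 1 / p i) (1 / p₀)
  hv : Measurable v
  hvpos : ∀ x, 0 < v x
  hvint : Integrable v μ
  hω : ∀ i, Measurable (ω i)
  hωpos : ∀ i x, 0 < ω i x
  hωint : ∀ i, Integrable (ω i) μ
  hσint : ∀ i, Integrable (sigmaW (ω i) (p i)) μ
  hσnorm : ∃ Lσ : ℝ≥0∞, Lσ ≠ ⊤ ∧
    HasProdLim (fun i => wNorm μ (sigmaW (ω i) (p i)) (p i) (ω i)) Lσ
  hEσ : ∀ n : ℕ, ∀ᵐ x ∂μ,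
    prodLim (fun i =>
      ENNReal.ofReal ((μ[sigmaW (ω i) (p i)|ℱ n]) x) ^ (1 / conjExp (p i))) ≠ ⊤
  hσpos : ∀ᵐ x ∂μ,
    0 < prodLim (fun i => ENNReal.ofReal (sigmaW (ω i) (p i) x) ^ (1 / p i))

/-!
Termwise, the conditional Hölder inequality `E_n f ≤ E_n (f ^ p ω) ^ (1/p) E_n σ ^ (1/p')` comes
from taking conditional expectations in Young's inequality
`f ≤ λ ^ p / p · f ^ p ω + λ ^ (-p') / p' · σ` for countably many `λ` and then optimising in `λ`
pointwise. Multiplying these bounds over `i` is legitimate once `∏ᵢ E_n (fᵢ ^ pᵢ ωᵢ) ^ (1/pᵢ)` is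
finite a.e. For that, normalise `Xᵢ = E_n (fᵢ ^ pᵢ ωᵢ)` by `aᵢ = ‖fᵢ‖ ^ pᵢ ≥ ∫ Xᵢ`: weighted
AM-GM with the weights `θᵢ = p / pᵢ`, which sum to `1`, gives
`∏_{i<k} (Xᵢ / aᵢ) ^ θᵢ ≤ 1 + ∑ᵢ θᵢ Xᵢ / aᵢ`, and the last sum has integral at most `1`, hence is
finite a.e. Every partial product is then at most a finite multiple of `∏_{i<k} ‖fᵢ‖`.
-/

open Finset Real

theorem Real.prod_rpow_le_one_add_sum_mul {ι : Type*} (s : Finset ι) {w z : ι → ℝ}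
    (hw : ∀ i ∈ s, 0 ≤ w i) (hw1 : ∑ i ∈ s, w i ≤ 1) (hz : ∀ i ∈ s, 0 ≤ z i) :
    ∏ i ∈ s, z i ^ w i ≤ 1 + ∑ i ∈ s, w i * z i := by
  -- AM-GM on `s` with an extra point of value `1` carrying the missing weight `1 - ∑ w`
  have h := geom_mean_le_arith_mean_weighted s.insertNone
    (fun o => o.elim (1 - ∑ i ∈ s, w i) w) (fun o => o.elim 1 z)
    (by rintro (_ | i) hi
        · simpa using hw1
        · exact hw i (by simpa using hi))
    (by simp [Finset.sum_insertNone])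
    (by rintro (_ | i) hi
        · exact zero_le_one
        · exact hz i (by simpa using hi))
  simp only [Finset.prod_insertNone, Finset.sum_insertNone, Option.elim, one_rpow, one_mul,
    mul_one] at h
  linarith [Finset.sum_nonneg hw]

theorem ENNReal.prod_rpow_le_one_add_sum_mul {ι : Type*} (s : Finset ι) {w : ι → ℝ}
    {z : ι → ℝ≥0∞} (hw : ∀ i ∈ s, 0 ≤ w i) (hw1 : ∑ i ∈ s, w i ≤ 1) (hz : ∀ i ∈ s, z i ≠ ⊤) :
    ∏ i ∈ s, z i ^ w i ≤ 1 + ∑ i ∈ s, ENNReal.ofReal (w i) * z i := by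
  have h := ENNReal.ofReal_le_ofReal <| Real.prod_rpow_le_one_add_sum_mul s hw hw1
    (z := fun i => (z i).toReal) fun _ _ => ENNReal.toReal_nonneg
  rwa [ENNReal.ofReal_prod_of_nonneg fun i _ => rpow_nonneg ENNReal.toReal_nonneg _,
    ENNReal.ofReal_add zero_le_one (sum_nonneg fun i hi => mul_nonneg (hw i hi) toReal_nonneg),
    ENNReal.ofReal_one, ENNReal.ofReal_sum_of_nonneg fun i hi => mul_nonneg (hw i hi) toReal_nonneg,
    prod_congr rfl fun i hi => by
      rw [← ENNReal.ofReal_rpow_of_nonneg toReal_nonneg (hw i hi), ENNReal.ofReal_toReal (hz i hi)],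
    sum_congr rfl fun i hi => by
      rw [ENNReal.ofReal_mul (hw i hi), ENNReal.ofReal_toReal (hz i hi)]] at h

theorem Real.le_rpow_mul_rpow_of_forall_le_of_pos {q q' A B E : ℝ} (hpq : q.HolderConjugate q')
    (hA : 0 < A) (hB : 0 < B) (hE : ∀ s, E ≤ exp (q * s) / q * A + exp (-(q' * s)) / q' * B) :
    E ≤ A ^ (1 / q) * B ^ (1 / q') := by
  obtain ⟨a, rfl⟩ : ∃ a, A = exp a := ⟨log A, (exp_log hA).symm⟩
  obtain ⟨b, rfl⟩ : ∃ b, B = exp b := ⟨log B, (exp_log hB).symm⟩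
  have hq := hpq.pos.ne'
  have hq' := hpq.symm.pos.ne'
  have hsum : q + q' = q * q' := hpq.mul_eq_add.symm
  -- the minimising parameter, at which both terms equal `exp (a / q + b / q')`
  set s₀ := (b - a) / (q + q')
  have h₁ : q * s₀ + a = a / q + b / q' := by
    simp only [s₀, hsum]; field_simp; linear_combination (-a) * hsum
  have h₂ : -(q' * s₀) + b = a / q + b / q' := by
    simp only [s₀, hsum]; field_simp; linear_combination (-b) * hsum
  calc E ≤ _ := hE s₀
    _ = exp (a / q + b / q') * (1 / q + 1 / q') := by
      rw [div_mul_eq_mul_div, div_mul_eq_mul_div, ← exp_add, ← exp_add, h₁, h₂]; ring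
    _ = exp a ^ (1 / q) * exp b ^ (1 / q') := by
      rw [hpq.one_div_add_one_div, one_div_one, mul_one, ← exp_mul, ← exp_mul, ← exp_add]
      ring_nf

theorem Real.le_rpow_mul_rpow_of_forall_rat_le {q q' A B E : ℝ} (hpq : q.HolderConjugate q')
    (hA : 0 ≤ A) (hB : 0 ≤ B)
    (hE : ∀ r : ℚ, E ≤ exp (q * r) / q * A + exp (-(q' * r)) / q' * B) :
    E ≤ A ^ (1 / q) * B ^ (1 / q') := by
  have hq := hpq.pos
  have hq' := hpq.symm.pos
  have hE' (s : ℝ) : E ≤ exp (q * s) / q * A + exp (-(q' * s)) / q' * B :=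
    Rat.denseRange_cast.induction_on s (isClosed_le continuous_const (by fun_prop)) hE
  have hε (ε : ℝ) (hε : 0 < ε) : E ≤ (A + ε) ^ (1 / q) * (B + ε) ^ (1 / q') :=
    le_rpow_mul_rpow_of_forall_le_of_pos hpq (by positivity) (by positivity) fun s =>
      (hE' s).trans <| by gcongr <;> linarith
  have hlim : Filter.Tendsto (fun ε : ℝ => (A + ε) ^ (1 / q) * (B + ε) ^ (1 / q'))
      (nhdsWithin 0 (Set.Ioi 0)) (nhds (A ^ (1 / q) * B ^ (1 / q'))) := by
    refine tendsto_nhdsWithin_of_tendsto_nhds ?_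
    have hc : Continuous fun ε : ℝ => (A + ε) ^ (1 / q) * (B + ε) ^ (1 / q') :=
      ((continuous_const.add continuous_id).rpow_const fun _ => Or.inr (by positivity)).mul
        ((continuous_const.add continuous_id).rpow_const fun _ => Or.inr (by positivity))
    simpa using hc.tendsto 0
  exact ge_of_tendsto hlim (eventually_nhdsWithin_of_forall hε)

theorem young_inequality_sigmaW {q : ℝ} (hq : 1 < q) {a w : ℝ} (ha : 0 ≤ a) (hw : 0 < w)
    (s : ℝ) :
    a ≤ exp (q * s) / q * (a ^ q * w) +
      exp (-(conjExp q * s)) / conjExp q * w ^ (-(1 / (q - 1))) := by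
  have hpq : q.HolderConjugate (conjExp q) := Real.HolderConjugate.conjExponent hq
  have hq0 : q ≠ 0 := hpq.pos.ne'
  have hY := young_inequality_of_nonneg (a := a * w ^ (1 / q) * exp s)
    (b := w ^ (-(1 / q)) * exp (-s)) (by positivity) (by positivity) hpq
  have h₁ : a * w ^ (1 / q) * exp s * (w ^ (-(1 / q)) * exp (-s)) = a := by
    rw [mul_mul_mul_comm, mul_assoc a, ← rpow_add hw, ← exp_add]; simp
  have h₂ : (a * w ^ (1 / q) * exp s) ^ q = exp (q * s) * (a ^ q * w) := by
    rw [mul_rpow (by positivity) (exp_pos s).le, mul_rpow ha (by positivity), ← rpow_mul hw.le,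
      ← exp_mul, one_div_mul_cancel hq0, rpow_one]; ring_nf
  have h₃ : (w ^ (-(1 / q)) * exp (-s)) ^ conjExp q =
      exp (-(conjExp q * s)) * w ^ (-(1 / (q - 1))) := by
    rw [mul_rpow (by positivity) (exp_pos _).le, ← rpow_mul hw.le, ← exp_mul]
    have : -(1 / q) * conjExp q = -(1 / (q - 1)) := by
      simp only [conjExp]; field_simp
    rw [this]; ring_nf
  rw [h₁, h₂, h₃] at hY
  exact hY.trans_eq (by ring)

theorem ae_ofReal_condExp_le_rpow_mul_rpow {m m0 : MeasurableSpace Ω} {μ : Measure Ω} {q : ℝ}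
    (hq : 1 < q) {f w : Ω → ℝ} (hf : AEStronglyMeasurable f μ) (hf0 : ∀ x, 0 ≤ f x)
    (hw : ∀ x, 0 < w x) (hg : Integrable (fun x => f x ^ q * w x) μ)
    (hσ : Integrable (sigmaW w q) μ) :
    ∀ᵐ x ∂μ, ENNReal.ofReal ((μ[f|m]) x) ≤
      ENNReal.ofReal ((μ[fun y => f y ^ q * w y|m]) x) ^ (1 / q) *
        ENNReal.ofReal ((μ[sigmaW w q|m]) x) ^ (1 / conjExp q) := by
  have hpq : q.HolderConjugate (conjExp q) := Real.HolderConjugate.conjExponent hq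
  set g := fun x => f x ^ q * w x
  set σ := sigmaW w q
  set c₁ : ℝ → ℝ := fun s => exp (q * s) / q
  set c₂ : ℝ → ℝ := fun s => exp (-(conjExp q * s)) / conjExp q
  have hyoung (s : ℝ) : f ≤ c₁ s • g + c₂ s • σ := fun x =>
    young_inequality_sigmaW hq (hf0 x) (hw x) s
  have hfi : Integrable f μ := ((hg.smul (c₁ 0)).add (hσ.smul (c₂ 0))).mono' hf <|
    Eventually.of_forall fun x => (Real.norm_of_nonneg (hf0 x)).trans_le (hyoung 0 x)
  have hcond (s : ℝ) :
      ∀ᵐ x ∂μ, (μ[f|m]) x ≤ c₁ s * (μ[g|m]) x + c₂ s * (μ[σ|m]) x := by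
    filter_upwards [condExp_mono hfi ((hg.smul (c₁ s)).add (hσ.smul (c₂ s)))
        (Eventually.of_forall (hyoung s)), condExp_add (hg.smul (c₁ s)) (hσ.smul (c₂ s)) m,
      condExp_smul (c₁ s) g m, condExp_smul (c₂ s) σ m] with x hmono hadd hsmul₁ hsmul₂
    rwa [hadd, Pi.add_apply, hsmul₁, hsmul₂] at hmono
  have hgE : 0 ≤ᵐ[μ] μ[g|m] := condExp_nonneg <| Eventually.of_forall fun x =>
    mul_nonneg (rpow_nonneg (hf0 x) _) (hw x).le
  have hσE : 0 ≤ᵐ[μ] μ[σ|m] := condExp_nonneg <| Eventually.of_forall fun x =>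
    rpow_nonneg (hw x).le _
  filter_upwards [ae_all_iff.2 fun r : ℚ => hcond r, hgE, hσE] with x hx hgx hσx
  rw [ENNReal.ofReal_rpow_of_nonneg hgx (one_div_pos.2 hpq.pos).le,
    ENNReal.ofReal_rpow_of_nonneg hσx (one_div_pos.2 hpq.symm.pos).le,
    ← ENNReal.ofReal_mul (rpow_nonneg hgx _)]
  exact ENNReal.ofReal_le_ofReal (le_rpow_mul_rpow_of_forall_rat_le hpq hgx hσx hx)

theorem prodLim_le_mul_of_le {a b c : ℕ → ℝ≥0∞} (h : ∀ i, a i ≤ b i * c i)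
    (hb : prodLim b ≠ ⊤) (hc : prodLim c ≠ ⊤) : prodLim a ≤ prodLim b * prodLim c :=
  calc prodLim a
      ≤ limsup ((fun k => ∏ i ∈ range k, b i) * fun k => ∏ i ∈ range k, c i) atTop :=
        limsup_le_limsup <| Eventually.of_forall fun k => by
          simpa only [Pi.mul_apply, ← prod_mul_distrib] using prod_le_prod' fun i _ => h i
    _ ≤ prodLim b * prodLim c := ENNReal.limsup_mul_le' (Or.inr hc) (Or.inl hb)

theorem prodLim_le_mul_of_hasProdLim {a b : ℕ → ℝ≥0∞} {C L : ℝ≥0∞} (hC : C ≠ ⊤)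
    (hb : HasProdLim b L) (h : ∀ k, ∏ i ∈ range k, a i ≤ C * ∏ i ∈ range k, b i) :
    prodLim a ≤ C * L :=
  calc prodLim a ≤ limsup (fun k => C * ∏ i ∈ range k, b i) atTop :=
        limsup_le_limsup (Eventually.of_forall h)
    _ = C * L := by rw [ENNReal.limsup_const_mul_of_ne_top hC, hb.limsup_eq]

theorem ENNReal.div_mul_cancel_of_ne_top {a b : ℝ≥0∞} (hb : b ≠ ⊤) (h : a / b ≠ ⊤) :
    a / b * b = a := by
  rcases eq_or_ne b 0 with rfl | hb₀
  · by_contra ha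
    exact h (ENNReal.div_zero fun ha₀ => ha (by simp [ha₀]))
  · exact ENNReal.div_mul_cancel hb₀ hb

theorem ae_exists_prod_rpow_le_mul_prod_rpow {m0 : MeasurableSpace Ω} {μ : Measure Ω}
    {X : ℕ → Ω → ℝ≥0∞} (hX : ∀ i, AEMeasurable (X i) μ) {b : ℕ → ℝ≥0∞}
    (hXb : ∀ i, ∫⁻ x, X i x ∂μ ≤ b i) (hb : ∀ i, b i ≠ ⊤) {e : ℕ → ℝ} (he : ∀ i, 0 ≤ e i)
    (he₁ : ∀ k, ∑ i ∈ range k, e i ≤ 1) :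
    ∀ᵐ x ∂μ, ∃ C ≠ ⊤, ∀ k, ∏ i ∈ range k, X i x ^ e i ≤ C * ∏ i ∈ range k, b i ^ e i := by
  set Z : ℕ → Ω → ℝ≥0∞ := fun i x => X i x / b i
  have hZ (i : ℕ) : AEMeasurable (Z i) μ := (hX i).div_const _
  have hZ_lint (i : ℕ) : ∫⁻ x, Z i x ∂μ ≤ 1 := by
    simp only [Z, div_eq_mul_inv]
    rw [lintegral_mul_const'' _ (hX i), ← div_eq_mul_inv]
    exact ENNReal.div_le_of_le_mul (by simpa using hXb i)
  set S : Ω → ℝ≥0∞ := fun x => ∑' i, ENNReal.ofReal (e i) * Z i x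
  have hS_lint : ∫⁻ x, S x ∂μ ≤ 1 :=
    calc ∫⁻ x, S x ∂μ = ∑' i, ∫⁻ x, ENNReal.ofReal (e i) * Z i x ∂μ :=
          lintegral_tsum fun i => (hZ i).const_mul _
      _ ≤ ∑' i, ENNReal.ofReal (e i) := ENNReal.tsum_le_tsum fun i => by
          rw [lintegral_const_mul'' _ (hZ i)]
          exact mul_le_of_le_one_right' (hZ_lint i)
      _ ≤ 1 := ENNReal.tsum_le_of_sum_range_le fun k => by
          rw [← ENNReal.ofReal_sum_of_nonneg fun i _ => he i, ← ENNReal.ofReal_one]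
          exact ENNReal.ofReal_le_ofReal (he₁ k)
  filter_upwards [ae_lt_top' (AEMeasurable.tsum fun i => (hZ i).const_mul _)
      (hS_lint.trans_lt ENNReal.one_lt_top).ne,
    ae_all_iff.2 fun i => ae_lt_top' (hZ i) ((hZ_lint i).trans_lt ENNReal.one_lt_top).ne]
    with x hSx hZx
  refine ⟨1 + S x, ENNReal.add_ne_top.2 ⟨ENNReal.one_ne_top, hSx.ne⟩, fun k => ?_⟩
  calc ∏ i ∈ range k, X i x ^ e i = ∏ i ∈ range k, Z i x ^ e i * b i ^ e i :=
        prod_congr rfl fun i _ => by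
          rw [← ENNReal.mul_rpow_of_nonneg _ _ (he i),
            ENNReal.div_mul_cancel_of_ne_top (hb i) (hZx i).ne]
    _ = (∏ i ∈ range k, Z i x ^ e i) * ∏ i ∈ range k, b i ^ e i := prod_mul_distrib
    _ ≤ (1 + S x) * ∏ i ∈ range k, b i ^ e i := by
        gcongr
        refine (ENNReal.prod_rpow_le_one_add_sum_mul _ (fun i _ => he i) (he₁ k)
          fun i _ => (hZx i).ne).trans ?_
        gcongr
        exact ENNReal.sum_le_tsum _

theorem ae_prodLim_rpow_ne_top {m0 : MeasurableSpace Ω} {μ : Measure Ω} {X : ℕ → Ω → ℝ≥0∞}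
    (hX : ∀ i, AEMeasurable (X i) μ) {b : ℕ → ℝ≥0∞} (hXb : ∀ i, ∫⁻ x, X i x ∂μ ≤ b i)
    (hb : ∀ i, b i ≠ ⊤) {e : ℕ → ℝ} {s : ℝ} (hs : 0 < s) (he : ∀ i, 0 ≤ e i)
    (hes : ∀ k, ∑ i ∈ range k, e i ≤ s) {L : ℝ≥0∞} (hL : HasProdLim (fun i => b i ^ e i) L)
    (hL_top : L ≠ ⊤) : ∀ᵐ x ∂μ, prodLim (fun i => X i x ^ e i) ≠ ⊤ := by
  have hes' (k : ℕ) : ∑ i ∈ range k, e i / s ≤ 1 := by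
    rw [← sum_div, div_le_one hs]; exact hes k
  have hrescale (a : ℕ → ℝ≥0∞) (k : ℕ) :
      ∏ i ∈ range k, a i ^ e i = (∏ i ∈ range k, a i ^ (e i / s)) ^ s := by
    rw [← ENNReal.prod_rpow_of_nonneg hs.le]
    exact prod_congr rfl fun i _ => by rw [← ENNReal.rpow_mul, div_mul_cancel₀ _ hs.ne']
  filter_upwards [ae_exists_prod_rpow_le_mul_prod_rpow hX hXb hb
    (fun i => div_nonneg (he i) hs.le) hes'] with x ⟨C, hC, hCk⟩
  have hCs : C ^ s ≠ ⊤ := ENNReal.rpow_ne_top_of_nonneg hs.le hC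
  refine ne_top_of_le_ne_top (ENNReal.mul_ne_top hCs hL_top)
    (prodLim_le_mul_of_hasProdLim hCs hL fun k => ?_)
  rw [hrescale (fun i => X i x), hrescale b, ← ENNReal.mul_rpow_of_nonneg _ _ hs.le]
  exact ENNReal.rpow_le_rpow (hCk k) hs.le

theorem lintegral_ofReal_condExp_le {m m0 : MeasurableSpace Ω} {μ : Measure Ω} {g : Ω → ℝ}
    (hg : 0 ≤ᵐ[μ] g) :
    ∫⁻ x, ENNReal.ofReal ((μ[g|m]) x) ∂μ ≤ ∫⁻ x, ENNReal.ofReal (g x) ∂μ :=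
  calc ∫⁻ x, ENNReal.ofReal ((μ[g|m]) x) ∂μ ≤ eLpNorm (μ[g|m]) 1 μ := by
        rw [eLpNorm_one_eq_lintegral_enorm]; exact lintegral_mono fun x => ofReal_le_enorm _
    _ ≤ eLpNorm g 1 μ := eLpNorm_condExp_le_eLpNorm g le_rfl
    _ = ∫⁻ x, ENNReal.ofReal (g x) ∂μ := by
        rw [eLpNorm_one_eq_lintegral_enorm]
        exact lintegral_congr_ae (hg.mono fun x hx => enorm_of_nonneg hx)

theorem lintegral_ofReal_rpow_mul {m0 : MeasurableSpace Ω} {μ : Measure Ω} {f w : Ω → ℝ} {q : ℝ}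
    (hf : ∀ x, 0 ≤ f x) (hq : 0 ≤ q) :
    ∫⁻ x, ENNReal.ofReal (f x ^ q * w x) ∂μ =
      ∫⁻ x, ENNReal.ofReal (f x) ^ q * ENNReal.ofReal (w x) ∂μ :=
  lintegral_congr fun x => by
    rw [ENNReal.ofReal_mul (rpow_nonneg (hf x) _), ENNReal.ofReal_rpow_of_nonneg (hf x) hq]

theorem prod_condexp_le_prod_condexp_mul_general
    {m0 : MeasurableSpace Ω} (μ : Measure Ω)
    (ℱ : Filtration ℕ m0) (p : ℕ → ℝ) (p₀ : ℝ) (v : Ω → ℝ) (ω : ℕ → Ω → ℝ)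
    (hS : Standing μ ℱ p p₀ v ω)
    (f : ℕ → Ω → ℝ) (Lf : ℝ≥0∞) (hf : Adm μ p ω f Lf) :
    ∀ n : ℕ, ∀ᵐ x ∂μ,
      prodLim (fun i => ENNReal.ofReal ((μ[f i|ℱ n]) x))
        ≤ prodLim (fun i =>
            ENNReal.ofReal ((μ[(fun y => f i y ^ p i * ω i y)|ℱ n]) x) ^ (1 / p i)) *
          prodLim (fun i =>
            ENNReal.ofReal ((μ[sigmaW (ω i) (p i)|ℱ n]) x) ^ (1 / conjExp (p i))) ∧
      prodLim (fun i =>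
            ENNReal.ofReal ((μ[(fun y => f i y ^ p i * ω i y)|ℱ n]) x) ^ (1 / p i)) *
          prodLim (fun i =>
            ENNReal.ofReal ((μ[sigmaW (ω i) (p i)|ℱ n]) x) ^ (1 / conjExp (p i))) ≠ ⊤ := by
  obtain ⟨hf_meas, hf_nonneg, hf_norm, hLf, hf_prod⟩ := hf
  intro n
  have hp_inv (i : ℕ) : 0 < 1 / p i := one_div_pos.2 (zero_lt_one.trans (hS.hp i))
  have hg_nonneg (i : ℕ) (x : Ω) : 0 ≤ f i x ^ p i * ω i x :=
    mul_nonneg (rpow_nonneg (hf_nonneg i x) _) (hS.hωpos i x).le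
  have hg_lint (i : ℕ) := lintegral_ofReal_rpow_mul (μ := μ) (w := ω i) (hf_nonneg i)
    (one_div_pos.1 (hp_inv i)).le
  have hg_fin (i : ℕ) : ∫⁻ x, ENNReal.ofReal (f i x) ^ p i * ENNReal.ofReal (ω i x) ∂μ ≠ ⊤ :=
    mt (ENNReal.rpow_eq_top_iff_of_pos (hp_inv i)).2 (hf_norm i)
  have hg_int (i : ℕ) : Integrable (fun y => f i y ^ p i * ω i y) μ :=
    (lintegral_ofReal_ne_top_iff_integrable
      (((hf_meas i).pow_const _).mul (hS.hω i)).aestronglyMeasurable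
      (Eventually.of_forall (hg_nonneg i))).1 ((hg_lint i).trans_ne (hg_fin i))
  have hP : ∀ᵐ x ∂μ, prodLim (fun i =>
      ENNReal.ofReal ((μ[(fun y => f i y ^ p i * ω i y)|ℱ n]) x) ^ (1 / p i)) ≠ ⊤ :=
    ae_prodLim_rpow_ne_top (fun i => integrable_condExp.aemeasurable.ennreal_ofReal)
      (fun i => (lintegral_ofReal_condExp_le (Eventually.of_forall (hg_nonneg i))).trans_eq
        (hg_lint i)) hg_fin (one_div_pos.2 hS.hp₀) (fun i => (hp_inv i).le)
      (fun k => sum_le_hasSum _ (fun i _ => (hp_inv i).le) hS.hps) hf_prod hLf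
  have hHolder : ∀ᵐ x ∂μ, ∀ i, ENNReal.ofReal ((μ[f i|ℱ n]) x) ≤
      ENNReal.ofReal ((μ[(fun y => f i y ^ p i * ω i y)|ℱ n]) x) ^ (1 / p i) *
        ENNReal.ofReal ((μ[sigmaW (ω i) (p i)|ℱ n]) x) ^ (1 / conjExp (p i)) :=
    ae_all_iff.2 fun i => ae_ofReal_condExp_le_rpow_mul_rpow (hS.hp i)
      (hf_meas i).aestronglyMeasurable (hf_nonneg i) (hS.hωpos i) (hg_int i) (hS.hσint i)
  filter_upwards [hHolder, hP, hS.hEσ n] with x hx hPx hQx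
  exact ⟨prodLim_le_mul_of_le hx hPx hQx, ENNReal.mul_ne_top hPx hQx⟩

/-- For admissible f⃗, a.e. ∏ᵢ E_n(f i) ≤ (∏ᵢ E_n(f i^{p i} ω i)^{1/p i}) ·
(∏ᵢ E_n(ω i^{1-p i'})^{1/p i'}) < ∞. -/
theorem prod_condexp_le_prod_condexp_mul
    {m0 : MeasurableSpace Ω} (μ : Measure Ω) [IsProbabilityMeasure μ] (hc : μ.IsComplete)
    (ℱ : Filtration ℕ m0) (p : ℕ → ℝ) (p₀ : ℝ) (v : Ω → ℝ) (ω : ℕ → Ω → ℝ)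
    (hS : Standing μ ℱ p p₀ v ω)
    (f : ℕ → Ω → ℝ) (Lf : ℝ≥0∞) (hf : Adm μ p ω f Lf) :
    ∀ n : ℕ, ∀ᵐ x ∂μ,
      prodLim (fun i => ENNReal.ofReal ((μ[f i|ℱ n]) x))
        ≤ prodLim (fun i =>
            ENNReal.ofReal ((μ[(fun y => f i y ^ p i * ω i y)|ℱ n]) x) ^ (1 / p i)) *
          prodLim (fun i =>
            ENNReal.ofReal ((μ[sigmaW (ω i) (p i)|ℱ n]) x) ^ (1 / conjExp (p i))) ∧
      prodLim (fun i =>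
            ENNReal.ofReal ((μ[(fun y => f i y ^ p i * ω i y)|ℱ n]) x) ^ (1 / p i)) *
          prodLim (fun i =>
            ENNReal.ofReal ((μ[sigmaW (ω i) (p i)|ℱ n]) x) ^ (1 / conjExp (p i))) ≠ ⊤ :=
  prod_condexp_le_prod_condexp_mul_general μ ℱ p p₀ v ω hS f Lf hf
end
end

section
/- In the martingale setting with weight v, weight vector ω⃗ = (ω_1, ω_2, ...), exponents 1 < p_i < ∞ with ∑_{i=1}^∞ 1/p_i = 1/p, under the standing assumptions: if there is a constant C such that for all stopping times τ and all nonnegative f_i ∈ L^{p_i}(ω_i) with ∏_i ‖f_i‖_{L^{p_i}(ω_i)} < ∞, (∫_{{τ<∞}} ∏_{i=1}^∞ E_τ(f_i)^p v dμ)^{1/p} ≤ C ∏_{i=1}^∞ ‖f_i‖_{L^{p_i}(ω_i)}, then there is a constant C' such that ‖𝔐(f⃗)‖_{L^{p,∞}(v)} ≤ C' ∏_{i=1}^∞ ‖f_i‖_{L^{p_i}(ω_i)} for all such f⃗. -/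
open MeasureTheory Filter
open scoped ENNReal NNReal

noncomputable section

variable {Ω : Type*}

/-! For a level `λ`, the first time `n` at which `∏ᵢ E_n(fᵢ)` exceeds `λ` is a stopping time `τ`
with `{𝔐(f⃗) > λ} = {τ < ∞}`, and `∏ᵢ E_τ(fᵢ) > λ` on that set. Chebyshev's inequality on
`{τ < ∞}` bounds `λ |{𝔐(f⃗) > λ}|_v^{1/p}` by the left side of the testing inequality, so the
testing constant itself works as `C'`. -/

section

variable {m0 : MeasurableSpace Ω}

def condExpProd (μ : Measure Ω) (ℱ : Filtration ℕ m0) (f : ℕ → Ω → ℝ) (n : ℕ) (x : Ω) :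
    ℝ≥0∞ :=
  prodLim fun i => ENNReal.ofReal ((μ[f i|ℱ n]) x)

theorem Measurable.prodLim {m : MeasurableSpace Ω} {a : ℕ → Ω → ℝ≥0∞}
    (ha : ∀ i, Measurable (a i)) : Measurable fun x => prodLim fun i => a i x :=
  .limsup fun _ => Finset.measurable_prod _ fun i _ => ha i

theorem adapted_condExpProd (μ : Measure Ω) (ℱ : Filtration ℕ m0) (f : ℕ → Ω → ℝ) :
    Adapted ℱ (condExpProd μ ℱ f) := fun _ =>
  Measurable.prodLim fun _ => stronglyMeasurable_condExp.measurable.ennreal_ofReal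

theorem prodLim_stopCE_eq_stoppedValue (μ : Measure Ω) (ℱ : Filtration ℕ m0) (f : ℕ → Ω → ℝ)
    {τ : Ω → ℕ∞} {x : Ω} (hτ : τ x ≠ ⊤) :
    (prodLim fun i => ENNReal.ofReal (stopCE μ ℱ (f i) τ x)) =
      stoppedValue (condExpProd μ ℱ f) τ x := by
  obtain ⟨n, hn⟩ := WithTop.ne_top_iff_exists.mp hτ
  simp only [stopCE, stoppedValue, condExpProd, ← hn]
  rfl

theorem setOf_lt_doobM_eq (μ : Measure Ω) (ℱ : Filtration ℕ m0) (f : ℕ → Ω → ℝ) (c : ℝ≥0∞) :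
    {x | c < doobM μ ℱ f x} = {x | hittingAfter (condExpProd μ ℱ f) (Set.Ioi c) 0 x ≠ ⊤} := by
  ext x
  simp [hittingAfter_eq_top_iff, doobM, condExpProd, lt_iSup_iff]

end

theorem mul_setLIntegral_rpow_le {m : MeasurableSpace Ω} {μ : Measure Ω} {s : Set Ω}
    {c : ℝ≥0∞} {F w : Ω → ℝ≥0∞} {q : ℝ} (hq : 0 < q) (hs : MeasurableSet s)
    (hc : c ≠ ⊤) (hF : ∀ x ∈ s, c ≤ F x) :
    c * (∫⁻ x in s, w x ∂μ) ^ (1 / q) ≤ (∫⁻ x in s, F x ^ q * w x ∂μ) ^ (1 / q) :=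
  calc c * (∫⁻ x in s, w x ∂μ) ^ (1 / q)
      = (c ^ q * ∫⁻ x in s, w x ∂μ) ^ (1 / q) := by
        rw [ENNReal.mul_rpow_of_nonneg _ _ (by positivity), ← ENNReal.rpow_mul,
          mul_one_div_cancel hq.ne', ENNReal.rpow_one]
    _ = (∫⁻ x in s, c ^ q * w x ∂μ) ^ (1 / q) := by
        rw [lintegral_const_mul' _ _ (ENNReal.rpow_ne_top_of_nonneg hq.le hc)]
    _ ≤ (∫⁻ x in s, F x ^ q * w x ∂μ) ^ (1 / q) := by
        gcongr ?_ ^ _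
        exact setLIntegral_mono' hs fun x hx => by gcongr; exact hF x hx

theorem weakIneq_of_testIneq_general
    {m0 : MeasurableSpace Ω} (μ : Measure Ω)
    (ℱ : Filtration ℕ m0) (p : ℕ → ℝ) (p₀ : ℝ) (v : Ω → ℝ) (ω : ℕ → Ω → ℝ)
    (hS : Standing μ ℱ p p₀ v ω)
    (h : ∃ C : ℝ≥0∞, C ≠ ⊤ ∧ TestIneq μ ℱ p p₀ v ω C) :
    ∃ C' : ℝ≥0∞, C' ≠ ⊤ ∧ WeakIneq μ ℱ p p₀ v ω C' := by
  obtain ⟨C, hC, htest⟩ := h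
  refine ⟨C, hC, fun f Lf hf => iSup_le fun c => ?_⟩
  set τ := hittingAfter (condExpProd μ ℱ f) (Set.Ioi (c : ℝ≥0∞)) 0
  have hτ : IsStoppingTime ℱ τ :=
    (adapted_condExpProd μ ℱ f).isStoppingTime_hittingAfter measurableSet_Ioi
  have hle (x : Ω) (hx : τ x ≠ ⊤) :
      (c : ℝ≥0∞) ≤ prodLim fun i => ENNReal.ofReal (stopCE μ ℱ (f i) τ x) := by
    rw [prodLim_stopCE_eq_stoppedValue μ ℱ f hx]
    exact (hittingAfter_mem_set_of_ne_top hx).le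
  rw [setOf_lt_doobM_eq]
  exact (mul_setLIntegral_rpow_le hS.hp₀ hτ.measurableSet_eq_top.compl ENNReal.coe_ne_top
    hle).trans (htest τ hτ f Lf hf)

/-- If the testing inequality holds (for some finite constant), then the weak-type
inequality ‖𝔐(f⃗)‖_{L^{p₀,∞}(v)} ≤ C' ∏ᵢ ‖f i‖_{L^{p i}(ω i)} holds for all admissible f⃗. -/
theorem weakIneq_of_testIneq
    {m0 : MeasurableSpace Ω} (μ : Measure Ω) [IsProbabilityMeasure μ] (hc : μ.IsComplete)
    (ℱ : Filtration ℕ m0) (p : ℕ → ℝ) (p₀ : ℝ) (v : Ω → ℝ) (ω : ℕ → Ω → ℝ)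
    (hS : Standing μ ℱ p p₀ v ω)
    (h : ∃ C : ℝ≥0∞, C ≠ ⊤ ∧ TestIneq μ ℱ p p₀ v ω C) :
    ∃ C' : ℝ≥0∞, C' ≠ ⊤ ∧ WeakIneq μ ℱ p p₀ v ω C' :=
  weakIneq_of_testIneq_general μ ℱ p p₀ v ω hS h
end
end
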